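/- arXiv:2301.07831 — 2 statements merged into one kernel-verified Lean document; each statement's English description precedes it below -/
import Mathlib

section
/- Let Ψ be a real symmetric n×n matrix, e a vector in ℝⁿ, and t a real number. The block matrix [[Ψ, e], [eᵀ, t]] is positive semidefinite if and only if Ψ is positive semidefinite, Ψ Ψ† e = e, and t ≥ eᵀ Ψ† e. -/
open Matrix

/-- The four Penrose conditions characterizing the Moore–Penrose pseudo-inverse. -/
def IsMoorePenrose {n : Type*} [Fintype n] (A Ad : Matrix n n ℝ) : Prop :=
  A * Ad * A = A ∧ Ad * A * Ad = Ad ∧ (A * Ad)ᵀ = A * Ad ∧ (Ad * A)ᵀ = Ad * A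

/-!
The quadratic form of the bordered matrix at `(y, s)` is `yᵀΨy + 2s eᵀy + ts²`. When `e = Ψw`
it completes to the square `(y + sw)ᵀΨ(y + sw) + (t - eᵀw)s²`, which gives sufficiency, and
with `w = Ψ†e` and `y = -w, s = 1` also the bound on `t`. Conversely the form is affine in `y`
on `ker Ψ × {1}`, so being bounded below it forces `e ⊥ ker Ψ`; since `ΨΨ†` is the orthogonal
projection onto `range Ψ = (ker Ψ)ᗮ`, this is `ΨΨ†e = e`.
-/

lemma eq_zero_of_forall_mul_add_nonneg {a b : ℝ} (h : ∀ c, 0 ≤ a * c + b) : a = 0 := by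
  by_contra ha
  have := h (-(b + 1) / a)
  rw [mul_div_cancel₀ _ ha] at this
  linarith

variable {m : Type*} [Fintype m]

namespace IsMoorePenrose

variable {A Ad : Matrix m m ℝ}

lemma mul_mul_pinv (h : IsMoorePenrose A Ad) (hA : A.IsSymm) : A * (A * Ad) = A := by
  obtain ⟨h1, -, h3, -⟩ := h
  rw [← transpose_transpose (A * (A * Ad)), transpose_mul, h3, hA.eq, h1, hA.eq]

lemma mul_pinv_mul_self (h : IsMoorePenrose A Ad) : A * Ad * (A * Ad) = A * Ad := by
  rw [← mul_assoc, h.1]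

end IsMoorePenrose

lemma mulVec_eq_self_of_forall_mulVec_eq_zero {A P : Matrix m m ℝ} {e : m → ℝ}
    (hPt : Pᵀ = P) (hPP : P * P = P) (hAP : A * P = A)
    (he : ∀ v, A *ᵥ v = 0 → e ⬝ᵥ v = 0) : P *ᵥ e = e := by
  set r := e - P *ᵥ e
  have hPr : P *ᵥ r = 0 := by rw [mulVec_sub, mulVec_mulVec, hPP, sub_self]
  have hAr : A *ᵥ r = 0 := by rw [mulVec_sub, mulVec_mulVec, hAP, sub_self]
  have hPe_r : (P *ᵥ e) ⬝ᵥ r = 0 := by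
    rw [dotProduct_comm, dotProduct_mulVec, ← mulVec_transpose, hPt, hPr, zero_dotProduct]
  have hrr : r ⬝ᵥ r = 0 := by
    rw [show r ⬝ᵥ r = e ⬝ᵥ r - (P *ᵥ e) ⬝ᵥ r from sub_dotProduct _ _ _, he r hAr, hPe_r,
      sub_zero]
  exact (sub_eq_zero.mp (dotProduct_self_eq_zero.mp hrr)).symm

def borderedForm (A : Matrix m m ℝ) (e : m → ℝ) (t : ℝ) (y : m → ℝ) (s : ℝ) : ℝ :=
  y ⬝ᵥ A *ᵥ y + 2 * s * (e ⬝ᵥ y) + t * s ^ 2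

lemma sumElim_dotProduct_fromBlocks_mulVec (A : Matrix m m ℝ) (e : m → ℝ) (t : ℝ)
    (y : m → ℝ) (s : ℝ) :
    Sum.elim y (fun _ => s) ⬝ᵥ
        fromBlocks A (replicateCol (Fin 1) e) (replicateRow (Fin 1) e) (of fun _ _ => t) *ᵥ
          Sum.elim y (fun _ => s) =
      borderedForm A e t y s := by
  have hcol : (replicateCol (Fin 1) e *ᵥ fun _ => s) = s • e := by
    ext; simp [mulVec, dotProduct, mul_comm]
  have hrow : (fun _ : Fin 1 => s) ⬝ᵥ replicateRow (Fin 1) e *ᵥ y = s * (e ⬝ᵥ y) := by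
    simp [replicateRow_mulVec_eq_const, dotProduct]
  have hcorner : (fun _ : Fin 1 => s) ⬝ᵥ
      (of fun _ _ => t : Matrix (Fin 1) (Fin 1) ℝ) *ᵥ (fun _ => s) = t * s ^ 2 := by
    simp only [dotProduct, Finset.univ_unique, Fin.default_eq_zero, Fin.isValue, mulVec, of_apply,
      Finset.sum_const, Finset.card_singleton, one_smul]
    ring
  rw [fromBlocks_mulVec, sumElim_dotProduct_sumElim]
  simp only [Sum.elim_comp_inl, Sum.elim_comp_inr, dotProduct_add, hcol, hrow, hcorner,
    dotProduct_smul, smul_eq_mul, dotProduct_comm y e, borderedForm]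
  ring

lemma posSemidef_fromBlocks_iff_borderedForm_nonneg {A : Matrix m m ℝ} (hA : A.IsSymm)
    (e : m → ℝ) (t : ℝ) :
    (fromBlocks A (replicateCol (Fin 1) e) (replicateRow (Fin 1) e)
        (of fun _ _ => t)).PosSemidef ↔
      ∀ y s, 0 ≤ borderedForm A e t y s := by
  have hherm : (fromBlocks A (replicateCol (Fin 1) e) (replicateRow (Fin 1) e)
      (of fun _ _ => t)).IsHermitian :=
    (isHermitian_iff_isSymm.mpr hA).fromBlocks (by ext; rfl) (by ext; rfl)
  simp only [posSemidef_iff_dotProduct_mulVec, hherm, true_and, star_trivial]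
  refine ⟨fun h y s => ?_, fun h x => ?_⟩
  · rw [← sumElim_dotProduct_fromBlocks_mulVec]
    exact h _
  · have hx : x = Sum.elim (x ∘ Sum.inl) (fun _ => x (Sum.inr 0)) := by
      rw [← Sum.elim_comp_inl_inr x]
      congr 1
      funext i
      rw [Subsingleton.elim i 0]
      rfl
    rw [hx, sumElim_dotProduct_fromBlocks_mulVec]
    exact h _ _

lemma borderedForm_eq_of_mulVec_eq {A : Matrix m m ℝ} (hA : A.IsSymm) {e w : m → ℝ}
    (hw : A *ᵥ w = e) (t : ℝ) (y : m → ℝ) (s : ℝ) :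
    borderedForm A e t y s = (y + s • w) ⬝ᵥ A *ᵥ (y + s • w) + (t - e ⬝ᵥ w) * s ^ 2 := by
  have hwy : w ⬝ᵥ A *ᵥ y = e ⬝ᵥ y := by
    rw [dotProduct_mulVec, ← mulVec_transpose, hA.eq, hw]
  simp only [borderedForm, mulVec_add, mulVec_smul, add_dotProduct, smul_dotProduct,
    dotProduct_add, dotProduct_smul, smul_eq_mul, hwy, hw, dotProduct_comm y e,
    dotProduct_comm w e]
  ring

lemma dotProduct_eq_zero_of_borderedForm_nonneg {A : Matrix m m ℝ} {e : m → ℝ} {t : ℝ}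
    (h : ∀ y s, 0 ≤ borderedForm A e t y s) {v : m → ℝ} (hv : A *ᵥ v = 0) : e ⬝ᵥ v = 0 := by
  suffices 2 * (e ⬝ᵥ v) = 0 by linarith
  refine eq_zero_of_forall_mul_add_nonneg (b := t) fun c => ?_
  have := h (c • v) 1
  simp only [borderedForm, mulVec_smul, hv, smul_zero, dotProduct_zero, dotProduct_smul,
    smul_eq_mul] at this
  linarith

/-- The block matrix [[Ψ, e], [eᵀ, t]] is positive semidefinite iff Ψ ⪰ 0,
Ψ Ψ† e = e, and t ≥ eᵀ Ψ† e. -/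
theorem bordered_psd_iff {n : ℕ} (Ψ Ψd : Matrix (Fin n) (Fin n) ℝ) (e : Fin n → ℝ) (t : ℝ)
    (hΨ : Ψ.IsSymm) (hd : IsMoorePenrose Ψ Ψd) :
    (Matrix.fromBlocks Ψ (Matrix.replicateCol (Fin 1) e) (Matrix.replicateRow (Fin 1) e)
        (Matrix.of fun _ _ => t)).PosSemidef ↔
      Ψ.PosSemidef ∧ (Ψ * Ψd) *ᵥ e = e ∧ e ⬝ᵥ Ψd *ᵥ e ≤ t := by
  rw [posSemidef_fromBlocks_iff_borderedForm_nonneg hΨ]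
  constructor
  · intro h
    have hpsd : Ψ.PosSemidef := posSemidef_iff_dotProduct_mulVec.mpr
      ⟨isHermitian_iff_isSymm.mpr hΨ, fun y => by simpa [borderedForm] using h y 0⟩
    have he : (Ψ * Ψd) *ᵥ e = e :=
      mulVec_eq_self_of_forall_mulVec_eq_zero hd.2.2.1 hd.mul_pinv_mul_self
        (hd.mul_mul_pinv hΨ) fun _ => dotProduct_eq_zero_of_borderedForm_nonneg h
    have hw : Ψ *ᵥ (Ψd *ᵥ e) = e := by rw [mulVec_mulVec, he]
    have ht := h (-(Ψd *ᵥ e)) 1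
    rw [borderedForm_eq_of_mulVec_eq hΨ hw, one_smul, neg_add_cancel] at ht
    exact ⟨hpsd, he, by simpa using ht⟩
  · rintro ⟨hpsd, he, ht⟩ y s
    have hw : Ψ *ᵥ (Ψd *ᵥ e) = e := by rw [mulVec_mulVec, he]
    rw [borderedForm_eq_of_mulVec_eq hΨ hw]
    exact add_nonneg (by simpa using hpsd.dotProduct_mulVec_nonneg (y + s • Ψd *ᵥ e))
      (mul_nonneg (sub_nonneg.mpr ht) (sq_nonneg s))
end

section
/- Let groups Gₖ ⊆ {1,...,ℓ} with restriction matrices Rₖ and positive definite Cₖ, and suppose the sample counts nₖ ≥ 0 satisfy nₖ > 0 for at least one group containing index 1. Then e₁ lies in the column space of Ψ(n) = Σₖ nₖ Rₖᵀ Cₖ⁻¹ Rₖ, and hence Ψ(n) Ψ(n)† e₁ = e₁. -/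
open Matrix

/-- The restriction matrix of a group `S ⊆ {1,…,ℓ}`: its rows are the standard basis row
vectors `eᵢᵀ` for `i ∈ S`. -/
def restr {l : ℕ} (S : Finset (Fin l)) : Matrix S (Fin l) ℝ :=
  Matrix.of fun i j => if (i : Fin l) = j then 1 else 0

/-!
By the Penrose conditions `A A† A = A` and `(A A†)ᵀ = A A†`, the matrix `A A†` is the
orthogonal projection onto the column space of `A`, so it fixes every vector orthogonal to
the null space of `Aᵀ`. For the symmetric matrix `Ψ = ∑ₖ nₖ Rₖᵀ Cₖ⁻¹ Rₖ`, `Ψ v = 0` makes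
the quadratic form `vᵀ Ψ v = ∑ₖ nₖ (Rₖ v)ᵀ Cₖ⁻¹ (Rₖ v)`, a sum of nonnegative terms, vanish;
the term of a sampled group containing index 1 then forces `Rₖ v = 0`, so `v₁ = 0`.
-/

lemma restr_mulVec {l : ℕ} (S : Finset (Fin l)) (v : Fin l → ℝ) (i : S) :
    (restr S *ᵥ v) i = v i := by
  simp [restr, mulVec, dotProduct, ite_mul]

section OrthogonalProjection

variable {R m n : Type*} [CommRing R] [Fintype m] [Fintype n]

lemma transpose_mulVec_mul_mulVec_eq_zero {A : Matrix m n R} {Ad : Matrix n m R}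
    (h₁ : A * Ad * A = A) (h₃ : (A * Ad)ᵀ = A * Ad) (w : m → R) :
    Aᵀ *ᵥ (w - (A * Ad) *ᵥ w) = 0 := by
  have hAt : Aᵀ * (A * Ad) = Aᵀ := by
    rw [← h₃, ← transpose_mul, h₁]
  rw [mulVec_sub, mulVec_mulVec, hAt, sub_self]

lemma mul_mulVec_eq_self_of_forall_transpose_mulVec_eq_zero [LinearOrder R]
    [IsStrictOrderedRing R] {A : Matrix m n R} {Ad : Matrix n m R} (h₁ : A * Ad * A = A)
    (h₃ : (A * Ad)ᵀ = A * Ad) {w : m → R} (hw : ∀ v, Aᵀ *ᵥ v = 0 → v ⬝ᵥ w = 0) :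
    (A * Ad) *ᵥ w = w := by
  set v := w - (A * Ad) *ᵥ w
  have hAv : Aᵀ *ᵥ v = 0 := transpose_mulVec_mul_mulVec_eq_zero h₁ h₃ w
  have hPv : (A * Ad)ᵀ *ᵥ v = 0 := by
    rw [transpose_mul, ← mulVec_mulVec, hAv, mulVec_zero]
  have hvv : v ⬝ᵥ v = 0 := by
    calc v ⬝ᵥ v = v ⬝ᵥ w - v ⬝ᵥ ((A * Ad) *ᵥ w) := dotProduct_sub _ _ _
      _ = 0 - ((A * Ad)ᵀ *ᵥ v) ⬝ᵥ w := by
          rw [hw v hAv, dotProduct_mulVec, mulVec_transpose]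
      _ = 0 := by rw [hPv, zero_dotProduct, sub_zero]
  exact (sub_eq_zero.mp (dotProduct_self_eq_zero.mp hvv)).symm

end OrthogonalProjection

section WeightedGram

variable {ι n : Type*} [Fintype ι] {m : ι → Type*} [∀ k, Fintype (m k)]

lemma isSymm_sum_smul_transpose_mul_mul {R : Type*} [CommRing R] (c : ι → R)
    (B : ∀ k, Matrix (m k) n R) {M : ∀ k, Matrix (m k) (m k) R} (hM : ∀ k, (M k).IsSymm) :
    (∑ k, c k • ((B k)ᵀ * M k * B k)).IsSymm := by
  rw [IsSymm, transpose_sum]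
  refine Finset.sum_congr rfl fun k _ => ?_
  rw [transpose_smul, transpose_mul, transpose_mul, transpose_transpose, (hM k).eq,
    Matrix.mul_assoc]

lemma dotProduct_sum_smul_transpose_mul_mul_mulVec [Fintype n] {R : Type*} [CommRing R]
    (c : ι → R) (B : ∀ k, Matrix (m k) n R) (M : ∀ k, Matrix (m k) (m k) R) (v : n → R) :
    v ⬝ᵥ ((∑ k, c k • ((B k)ᵀ * M k * B k)) *ᵥ v)
      = ∑ k, c k * (B k *ᵥ v ⬝ᵥ M k *ᵥ B k *ᵥ v) := by
  rw [sum_mulVec, dotProduct_sum]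
  refine Finset.sum_congr rfl fun k _ => ?_
  rw [smul_mulVec, dotProduct_smul, smul_eq_mul, ← mulVec_mulVec, ← mulVec_mulVec,
    dotProduct_mulVec, vecMul_transpose]

lemma mulVec_eq_zero_of_sum_smul_transpose_mul_mul_mulVec_eq_zero [Fintype n] {c : ι → ℝ}
    (hc : ∀ k, 0 ≤ c k) (B : ∀ k, Matrix (m k) n ℝ) {M : ∀ k, Matrix (m k) (m k) ℝ}
    (hM : ∀ k, (M k).PosDef) {v : n → ℝ}
    (hv : (∑ k, c k • ((B k)ᵀ * M k * B k)) *ᵥ v = 0) {k : ι} (hk : 0 < c k) :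
    B k *ᵥ v = 0 := by
  have hterm_nonneg : ∀ j, 0 ≤ c j * (B j *ᵥ v ⬝ᵥ M j *ᵥ B j *ᵥ v) := fun j =>
    mul_nonneg (hc j)
      (by simpa only [star_trivial] using (hM j).posSemidef.dotProduct_mulVec_nonneg (B j *ᵥ v))
  have hsum : ∑ j, c j * (B j *ᵥ v ⬝ᵥ M j *ᵥ B j *ᵥ v) = 0 := by
    rw [← dotProduct_sum_smul_transpose_mul_mul_mulVec, hv, dotProduct_zero]
  have hterm : c k * (B k *ᵥ v ⬝ᵥ M k *ᵥ B k *ᵥ v) = 0 :=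
    (Finset.sum_eq_zero_iff_of_nonneg fun j _ => hterm_nonneg j).mp hsum k (Finset.mem_univ k)
  by_contra hne
  have hpos := (hM k).dotProduct_mulVec_pos hne
  rw [star_trivial] at hpos
  exact (mul_pos hk hpos).ne' hterm

end WeightedGram

/-- If the high-fidelity index (the first index) belongs to some group with positive
sample count, then `e₁` lies in the column space of `Ψ(n)` and `Ψ(n) Ψ(n)† e₁ = e₁`. -/
theorem e1_in_col_space_of_sampled {l K : ℕ} (G : Fin K → Finset (Fin (l + 1)))
    (C : (k : Fin K) → Matrix (G k) (G k) ℝ) (hC : ∀ k, (C k).PosDef)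
    (n : Fin K → ℝ) (hn : ∀ k, 0 ≤ n k)
    (Ψd : Matrix (Fin (l + 1)) (Fin (l + 1)) ℝ)
    (hΨd : IsMoorePenrose (∑ k, n k • ((restr (G k))ᵀ * (C k)⁻¹ * restr (G k))) Ψd)
    (hsampled : ∃ k, 0 < n k ∧ (0 : Fin (l + 1)) ∈ G k) :
    (∃ x : Fin (l + 1) → ℝ,
        (∑ k, n k • ((restr (G k))ᵀ * (C k)⁻¹ * restr (G k))) *ᵥ x
          = (Pi.single 0 1 : Fin (l + 1) → ℝ)) ∧
      ((∑ k, n k • ((restr (G k))ᵀ * (C k)⁻¹ * restr (G k))) * Ψd) *ᵥ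
          (Pi.single 0 1 : Fin (l + 1) → ℝ) = (Pi.single 0 1 : Fin (l + 1) → ℝ) := by
  obtain ⟨h₁, -, h₃, -⟩ := hΨd
  obtain ⟨k, hk, h0k⟩ := hsampled
  have hCinv : ∀ k, ((C k)⁻¹).PosDef := fun k => (hC k).inv
  have hsymm := isSymm_sum_smul_transpose_mul_mul n (fun k => restr (G k))
    fun k => isHermitian_iff_isSymm.mp (hCinv k).isHermitian
  have he₁ : ∀ v, (∑ k, n k • ((restr (G k))ᵀ * (C k)⁻¹ * restr (G k)))ᵀ *ᵥ v = 0 →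
      v ⬝ᵥ Pi.single 0 1 = 0 := fun v hv => by
    rw [hsymm.eq] at hv
    have hRv := mulVec_eq_zero_of_sum_smul_transpose_mul_mul_mulVec_eq_zero hn _ hCinv hv hk
    simpa [restr_mulVec, dotProduct_single] using congrFun hRv ⟨0, h0k⟩
  have hproj := mul_mulVec_eq_self_of_forall_transpose_mulVec_eq_zero h₁ h₃ he₁
  exact ⟨⟨Ψd *ᵥ Pi.single 0 1, by rw [mulVec_mulVec, hproj]⟩, hproj⟩
end
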